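/- Suppose c1 ≤ Σ_{i=1}^{k} ψ(g(x), i) ≤ c2 holds for μ-almost every x and for g ∈ {f, f*}, and set Δ = R_ψ(f*) − R_ψ(f). Then for every η ∈ [0, (k−1)/k], the noisy risks satisfy R^η_ψ(f*) − R^η_ψ(f) ≤ ((c2 − c1 − kΔ)·η + (k−1)·Δ) / (k−1). -/
import Mathlib


open MeasureTheory Finset

/-- The clean ψ-risk: expected loss under the clean data distribution. -/
noncomputable def cleanRisk {X : Type*} [MeasurableSpace X] {k : ℕ}
    (μ : Measure (X × Fin k)) (ψ : (Fin k → ℝ) → Fin k → ℝ) (g : X → Fin k → ℝ) : ℝ :=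
  ∫ p, ψ (g p.1) p.2 ∂μ

/-- The ψ-risk under symmetric (uniform) label noise with noise rate η. -/
noncomputable def noisyRisk {X : Type*} [MeasurableSpace X] {k : ℕ}
    (μ : Measure (X × Fin k)) (ψ : (Fin k → ℝ) → Fin k → ℝ) (g : X → Fin k → ℝ)
    (η : ℝ) : ℝ :=
  ∫ p, ((1 - η) * ψ (g p.1) p.2
      + (η / ((k : ℝ) - 1)) * ∑ i ∈ Finset.univ.erase p.2, ψ (g p.1) i) ∂μ

lemma integrable_diag {X : Type*} [MeasurableSpace X] {k : ℕ}
    (μ : Measure (X × Fin k)) (ψ : (Fin k → ℝ) → Fin k → ℝ) (g : X → Fin k → ℝ)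
    (hint : ∀ i : Fin k, Integrable (fun p : X × Fin k => ψ (g p.1) i) μ) :
    Integrable (fun p : X × Fin k => ψ (g p.1) p.2) μ := by
  have heq : (fun p : X × Fin k => ψ (g p.1) p.2)
      = fun p => ∑ i : Fin k, if p.2 = i then ψ (g p.1) i else 0 := by
    funext p
    simp
  rw [heq]
  apply integrable_finset_sum
  intro i _
  have : (fun p : X × Fin k => if p.2 = i then ψ (g p.1) i else 0)
      = Set.indicator (Prod.snd ⁻¹' {i}) (fun p : X × Fin k => ψ (g p.1) i) := by
    funext p
    by_cases h : p.2 = i <;> simp [Set.indicator, h]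
  rw [this]
  exact (hint i).indicator (measurable_snd (measurableSet_singleton i))

lemma noisyRisk_eq {X : Type*} [MeasurableSpace X] {k : ℕ}
    (μ : Measure (X × Fin k)) (ψ : (Fin k → ℝ) → Fin k → ℝ) (g : X → Fin k → ℝ)
    (η : ℝ)
    (hint : ∀ i : Fin k, Integrable (fun p : X × Fin k => ψ (g p.1) i) μ) :
    noisyRisk μ ψ g η
      = (1 - η) * cleanRisk μ ψ g
        + (η / ((k : ℝ) - 1)) * ((∫ p, ∑ i, ψ (g p.1) i ∂μ) - cleanRisk μ ψ g) := by
  have hd := integrable_diag μ ψ g hint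
  have hS : Integrable (fun p : X × Fin k => ∑ i, ψ (g p.1) i) μ :=
    integrable_finset_sum _ (fun i _ => hint i)
  have heq : ∀ p : X × Fin k,
      (1 - η) * ψ (g p.1) p.2
        + (η / ((k : ℝ) - 1)) * ∑ i ∈ Finset.univ.erase p.2, ψ (g p.1) i
      = (1 - η) * ψ (g p.1) p.2
        + (η / ((k : ℝ) - 1)) * ((∑ i, ψ (g p.1) i) - ψ (g p.1) p.2) := by
    intro p
    rw [Finset.sum_erase_eq_sub (Finset.mem_univ p.2)]
  have h2 : Integrable (fun p : X × Fin k => (∑ i, ψ (g p.1) i) - ψ (g p.1) p.2) μ :=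
    hS.sub hd
  unfold noisyRisk cleanRisk
  simp_rw [heq]
  rw [integral_add (hd.const_mul _) (h2.const_mul _),
    integral_const_mul, integral_const_mul, integral_sub hS hd]

/-- if the per-point sum of losses over all classes is a.e. bounded
between c1 and c2 for both classifiers, and Δ = R_ψ(f*) − R_ψ(f), then for every
η ∈ [0, (k−1)/k] we have
R^η_ψ(f*) − R^η_ψ(f) ≤ ((c2 − c1 − kΔ)·η + (k−1)·Δ)/(k−1). -/
theorem noisyRisk_gap_bound {X : Type*} [MeasurableSpace X] {k : ℕ} (hk : 2 ≤ k)
    (μ : Measure (X × Fin k)) [IsProbabilityMeasure μ]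
    (f fstar : X → Fin k → ℝ) (ψ : (Fin k → ℝ) → Fin k → ℝ)
    (hintf : ∀ i : Fin k, Integrable (fun p : X × Fin k => ψ (f p.1) i) μ)
    (hintfstar : ∀ i : Fin k, Integrable (fun p : X × Fin k => ψ (fstar p.1) i) μ)
    (c1 c2 : ℝ)
    (hboundf : ∀ᵐ p ∂μ, c1 ≤ ∑ i, ψ (f p.1) i ∧ ∑ i, ψ (f p.1) i ≤ c2)
    (hboundfstar : ∀ᵐ p ∂μ, c1 ≤ ∑ i, ψ (fstar p.1) i ∧ ∑ i, ψ (fstar p.1) i ≤ c2)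
    (Δ : ℝ) (hΔ : Δ = cleanRisk μ ψ fstar - cleanRisk μ ψ f)
    (η : ℝ) (hη0 : 0 ≤ η) (hη1 : η ≤ ((k : ℝ) - 1) / k) :
    noisyRisk μ ψ fstar η - noisyRisk μ ψ f η
      ≤ ((c2 - c1 - (k : ℝ) * Δ) * η + ((k : ℝ) - 1) * Δ) / ((k : ℝ) - 1) := by
  have hk1 : (1 : ℝ) < (k : ℝ) := by exact_mod_cast hk.trans_lt' one_lt_two
  have hkne : (k : ℝ) - 1 ≠ 0 := by linarith
  have hkpos : (0 : ℝ) < (k : ℝ) - 1 := by linarith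
  set A := ∫ p, ∑ i, ψ (fstar p.1) i ∂μ with hA
  set B := ∫ p, ∑ i, ψ (f p.1) i ∂μ with hB
  have hSf : Integrable (fun p : X × Fin k => ∑ i, ψ (f p.1) i) μ :=
    integrable_finset_sum _ (fun i _ => hintf i)
  have hSfs : Integrable (fun p : X × Fin k => ∑ i, ψ (fstar p.1) i) μ :=
    integrable_finset_sum _ (fun i _ => hintfstar i)
  have hAle : A ≤ c2 := by
    have := integral_mono_ae hSfs (integrable_const c2)
      (hboundfstar.mono (fun p hp => hp.2))
    simpa using this
  have hBge : c1 ≤ B := by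
    have := integral_mono_ae (integrable_const c1) hSf
      (hboundf.mono (fun p hp => hp.1))
    simpa using this
  rw [noisyRisk_eq μ ψ fstar η hintfstar, noisyRisk_eq μ ψ f η hintf, ← hA, ← hB]
  have hc : 0 ≤ η / ((k : ℝ) - 1) := div_nonneg hη0 hkpos.le
  have key : η / ((k : ℝ) - 1) * (A - B) ≤ η / ((k : ℝ) - 1) * (c2 - c1) :=
    mul_le_mul_of_nonneg_left (by linarith) hc
  have hrhs : ((c2 - c1 - (k : ℝ) * Δ) * η + ((k : ℝ) - 1) * Δ) / ((k : ℝ) - 1)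
      = (1 - η) * Δ + η / ((k : ℝ) - 1) * ((c2 - c1) - Δ) := by
    field_simp
    ring
  rw [hrhs, hΔ]
  ring_nf
  ring_nf at key
  nlinarith [key]
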